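/- arXiv:2404.09434 — 2 statements merged into one kernel-verified Lean document; each statement's English description precedes it below -/
import Mathlib

section
/- Let n ≥ 5. The graph obtained from G_n by deleting the two edges x_1 y_2 and x_2 y_1 and then contracting the two edges x_1 x_2 and y_1 y_2 is isomorphic to G_{n−1}. -/
/-!
The contraction map sends index `k` of `ℤ/n` to `k` for `k ≤ 1` and to `k - 1` otherwise, so it
commutes with `i ↦ i + 1` except at `i = 1`. Hence every edge of `Gₙ` between indices `i ≠ 1` and
`i + 1` becomes an edge of `G_{n-1}`, and every edge of `G_{n-1}` lifts to such an edge. Of the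
edges between indices `1` and `2`, `x₁x₂` and `y₁y₂` collapse to loops, and the two deleted ones
are exactly those that would have produced the spurious edge `x₁y₁`.
-/

open SimpleGraph

/-- `G n` is the lexicographic product `Cₙ ∘ K̄₂`: the vertex `(i, false)` plays the role
of `xᵢ` and `(i, true)` plays the role of `yᵢ`, and `xᵢ, yᵢ` are each joined to
`x_{i+1}` and `y_{i+1}` (indices modulo `n`). -/
def lexCycleEmpty (n : ℕ) : SimpleGraph (ZMod n × Bool) :=
  SimpleGraph.fromRel (fun p q => p.1 + 1 = q.1)

/-- The graph obtained from `G` by identifying vertices along the map `f`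
(i.e. the quotient graph: loops are deleted and parallel edges are merged).
Contracting a set of edges corresponds to taking `f` to be the map identifying
the endpoints of each contracted edge. -/
def SimpleGraph.contractMap {V W : Type*} (G : SimpleGraph V) (f : V → W) : SimpleGraph W where
  Adj a b := a ≠ b ∧ ∃ u v, G.Adj u v ∧ f u = a ∧ f v = b
  symm := by
    constructor
    rintro a b ⟨hab, u, v, huv, hu, hv⟩
    exact ⟨hab.symm, v, u, huv.symm, hv, hu⟩
  loopless := by
    constructor
    rintro a ⟨ha, -⟩
    exact ha rfl

/-- The map identifying the index-`1` and index-`2` vertices of `Gₙ` (preserving the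
`x`/`y` side), realizing the contraction of the edges `x₁x₂` and `y₁y₂`:
indices `0` and `1` are kept, and every index `k ≥ 2` becomes `k - 1`. -/
def contractionMap (n : ℕ) : ZMod n × Bool → ZMod (n - 1) × Bool :=
  fun p => (if (p.1).val ≤ 1 then ((p.1).val : ZMod (n - 1))
            else (((p.1).val - 1 : ℕ) : ZMod (n - 1)), p.2)

theorem SimpleGraph.contractMap_eq_of_map_adj_of_lift_adj {V W : Type*} {G : SimpleGraph V}
    {H : SimpleGraph W} {f : V → W}
    (map_adj : ∀ u v, G.Adj u v → f u ≠ f v → H.Adj (f u) (f v))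
    (lift_adj : ∀ a b, H.Adj a b → ∃ u v, G.Adj u v ∧ f u = a ∧ f v = b) :
    G.contractMap f = H := by
  ext a b
  constructor
  · rintro ⟨hab, u, v, huv, rfl, rfl⟩
    exact map_adj u v huv hab
  · intro h
    exact ⟨h.ne, lift_adj a b h⟩

section

variable {n : ℕ}

def contractIndex (n : ℕ) (i : ZMod n) : ZMod (n - 1) :=
  if i.val ≤ 1 then (i.val : ZMod (n - 1)) else ((i.val - 1 : ℕ) : ZMod (n - 1))

theorem contractionMap_apply (p : ZMod n × Bool) :
    contractionMap n p = (contractIndex n p.1, p.2) := rfl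

theorem contractIndex_natCast {k : ℕ} (hk : k < n) :
    contractIndex n k = if k ≤ 1 then (k : ZMod (n - 1)) else ((k - 1 : ℕ) : ZMod (n - 1)) := by
  rw [contractIndex, ZMod.val_cast_of_lt hk]

theorem contractIndex_two (hn : 3 ≤ n) : contractIndex n 2 = contractIndex n 1 := by
  rw [contractIndex, contractIndex, ZMod.val_ofNat_of_lt (by omega : 2 < n),
    ZMod.val_one'' (by omega)]
  simp

theorem contractIndex_add_one (hn : 3 ≤ n) {i : ZMod n} (hi : i ≠ 1) :
    contractIndex n (i + 1) = contractIndex n i + 1 := by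
  have : NeZero n := ⟨by omega⟩
  obtain ⟨k, hk, rfl⟩ : ∃ k < n, (k : ZMod n) = i := ⟨i.val, i.val_lt, i.natCast_zmod_val⟩
  have hk1 : k ≠ 1 := by rintro rfl; exact hi Nat.cast_one
  rw [contractIndex_natCast hk]
  rcases Nat.lt_or_ge (k + 1) n with hlt | hge
  · rw [← Nat.cast_add_one, contractIndex_natCast hlt]
    rcases Nat.lt_or_ge k 2 with hk2 | hk2
    · obtain rfl : k = 0 := by omega
      simp
    · rw [if_neg (by omega), if_neg (by omega), show k + 1 - 1 = k - 1 + 1 by omega]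
      push_cast; rfl
  · -- `k = n - 1` wraps around to `0`, and so does its image `n - 2`
    rw [← Nat.cast_add_one, show k + 1 = n by omega, ZMod.natCast_self, if_neg (by omega),
      ← Nat.cast_add_one, show k - 1 + 1 = n - 1 by omega, ZMod.natCast_self,
      ← Nat.cast_zero, contractIndex_natCast (by omega)]
    simp

theorem exists_contractIndex_eq (hn : 3 ≤ n) (a : ZMod (n - 1)) :
    ∃ i : ZMod n, i ≠ 1 ∧ contractIndex n i = a := by
  have : NeZero (n - 1) := ⟨by omega⟩
  obtain ⟨j, hj, rfl⟩ : ∃ j < n - 1, (j : ZMod (n - 1)) = a :=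
    ⟨a.val, a.val_lt, a.natCast_zmod_val⟩
  rcases Nat.eq_zero_or_pos j with rfl | hj0
  · refine ⟨0, ?_, ?_⟩
    · intro h
      have := congrArg ZMod.val h
      rw [ZMod.val_zero, ZMod.val_one'' (by omega)] at this
      omega
    · rw [← Nat.cast_zero, contractIndex_natCast (by omega)]
      simp
  · refine ⟨(j + 1 : ℕ), ?_, ?_⟩
    · intro h
      have := congrArg ZMod.val h
      rw [ZMod.val_cast_of_lt (by omega), ZMod.val_one'' (by omega)] at this
      omega
    · rw [contractIndex_natCast (by omega), if_neg (by omega), Nat.add_sub_cancel]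

def cutEdges (n : ℕ) : Set (Sym2 (ZMod n × Bool)) :=
  {s(((1 : ZMod n), false), ((2 : ZMod n), true)), s(((1 : ZMod n), true), ((2 : ZMod n), false))}

theorem mk_mem_cutEdges_iff (hn : 3 ≤ n) {u v : ZMod n × Bool} (h : u.1 + 1 = v.1) :
    s(u, v) ∈ cutEdges n ↔ u.1 = 1 ∧ u.2 ≠ v.2 := by
  obtain ⟨i, b⟩ := u
  obtain ⟨_, c⟩ := v
  obtain rfl : i + 1 = _ := h
  by_cases hi : i = 1
  · subst hi
    cases b <;> cases c <;> simp [cutEdges, one_add_one_eq_two]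
  · have h2 : (2 : ZMod n) ≠ 0 := by
      intro h
      have := congrArg ZMod.val h
      rw [ZMod.val_ofNat_of_lt (by omega : 2 < n), ZMod.val_zero] at this
      exact two_ne_zero this
    rcases eq_or_ne i 2 with rfl | hi2
    · simp [cutEdges, hi, h2]
    · simp [cutEdges, hi, hi2]

theorem lexCycleEmpty_adj {p q : ZMod n × Bool} :
    (lexCycleEmpty n).Adj p q ↔ p ≠ q ∧ (p.1 + 1 = q.1 ∨ q.1 + 1 = p.1) :=
  fromRel_adj _ _ _

theorem lexCycleEmpty_adj_of_add_one (hn : 2 ≤ n) {p q : ZMod n × Bool} (h : p.1 + 1 = q.1) :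
    (lexCycleEmpty n).Adj p q := by
  have : Fact (1 < n) := ⟨hn⟩
  refine lexCycleEmpty_adj.2 ⟨?_, Or.inl h⟩
  rintro rfl
  exact one_ne_zero (add_eq_left.mp h)

theorem contractionMap_fst_add_one (hn : 3 ≤ n) {u v : ZMod n × Bool} (h : u.1 + 1 = v.1)
    (hcut : s(u, v) ∉ cutEdges n) (hne : contractionMap n u ≠ contractionMap n v) :
    (contractionMap n u).1 + 1 = (contractionMap n v).1 := by
  rw [mk_mem_cutEdges_iff hn h, not_and_not_right] at hcut
  by_cases hu : u.1 = 1
  · refine absurd ?_ hne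
    rw [contractionMap_apply, contractionMap_apply, ← h, hu, one_add_one_eq_two,
      contractIndex_two hn, hcut hu]
  · rw [contractionMap_apply, contractionMap_apply, ← h, contractIndex_add_one hn hu]

theorem exists_adj_contractionMap_eq (hn : 3 ≤ n) {a b : ZMod (n - 1) × Bool}
    (h : a.1 + 1 = b.1) :
    ∃ u v, ((lexCycleEmpty n).deleteEdges (cutEdges n)).Adj u v ∧
      contractionMap n u = a ∧ contractionMap n v = b := by
  obtain ⟨i, hi, hia⟩ := exists_contractIndex_eq hn a.1
  refine ⟨(i, a.2), (i + 1, b.2), ?_, ?_, ?_⟩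
  · rw [deleteEdges_adj, mk_mem_cutEdges_iff hn rfl]
    exact ⟨lexCycleEmpty_adj_of_add_one (by omega) rfl, fun h => hi h.1⟩
  · rw [contractionMap_apply, hia]
  · rw [contractionMap_apply, contractIndex_add_one hn hi, hia, h]

theorem contractMap_deleteEdges_cutEdges (hn : 3 ≤ n) :
    ((lexCycleEmpty n).deleteEdges (cutEdges n)).contractMap (contractionMap n) =
      lexCycleEmpty (n - 1) := by
  refine contractMap_eq_of_map_adj_of_lift_adj (fun u v huv hne => ?_) (fun a b hab => ?_)
  · obtain ⟨huv, hcut⟩ := (deleteEdges_adj ..).1 huv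
    refine lexCycleEmpty_adj.2 ⟨hne, ?_⟩
    rcases (lexCycleEmpty_adj.1 huv).2 with h | h
    · exact Or.inl (contractionMap_fst_add_one hn h hcut hne)
    · exact Or.inr (contractionMap_fst_add_one hn h (by rwa [Sym2.eq_swap]) hne.symm)
  · rcases (lexCycleEmpty_adj.1 hab).2 with h | h
    · exact exists_adj_contractionMap_eq hn h
    · obtain ⟨u, v, huv, hu, hv⟩ := exists_adj_contractionMap_eq hn h
      exact ⟨v, u, huv.symm, hv, hu⟩

end

/-- let `n ≥ 5`. The graph obtained from `Gₙ` by deleting the two edges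
`x₁y₂` and `x₂y₁` and then contracting the two edges `x₁x₂` and `y₁y₂` is isomorphic
to `G_{n-1}`. -/
theorem stmt_5 (n : ℕ) (hn : 5 ≤ n) :
    Nonempty
      ((((lexCycleEmpty n).deleteEdges
            {s(((1 : ZMod n), false), ((2 : ZMod n), true)),
             s(((1 : ZMod n), true), ((2 : ZMod n), false))}).contractMap
          (contractionMap n)) ≃g lexCycleEmpty (n - 1)) :=
  ⟨(contractMap_deleteEdges_cutEdges (n := n) (by omega)).symm ▸ Iso.refl⟩
end

section
/- Let n ≥ 5 and 1 ≤ i ≤ n. The graph obtained from G_n by deleting the four vertices x_i, x_{i+1}, y_i, y_{i+1} (indices modulo n) is connected. -/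
/-! Removing the columns `{xᵢ, yᵢ}` and `{x_{i+1}, y_{i+1}}` of `Gₙ` leaves the columns
`i + 2, …, i + n - 1`, which form a path; any two consecutive columns span a `K₂,₂`, so every
vertex is joined to `x_{i+2}` by walking along the path, and `y_{i+2}` reaches `x_{i+2}` through
`x_{i+3}` (which exists as soon as `n ≥ 4`). -/

open SimpleGraph

theorem ZMod.two_le_val_iff {n : ℕ} (hn : 1 < n) {d : ZMod n} : 2 ≤ d.val ↔ d ≠ 0 ∧ d ≠ 1 := by
  rw [Ne, Ne, ← ZMod.val_eq_zero, ← ZMod.val_eq_one hn]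
  omega

theorem setOf_notMem_columns {α : Type*} (a a' : α) :
    {v : α × Bool | v ∉ ({(a, false), (a', false), (a, true), (a', true)} : Set (α × Bool))} =
      {v | v.1 ≠ a ∧ v.1 ≠ a'} := by
  ext ⟨c, b⟩
  cases b <;> simp [and_comm]

namespace lexCycleEmpty

variable {n : ℕ}

theorem adj_of_fst_add_one_eq (hn : 1 < n) {p q : ZMod n × Bool} (h : p.1 + 1 = q.1) :
    (lexCycleEmpty n).Adj p q := by
  refine (fromRel_adj _ _ _).2 ⟨?_, Or.inl h⟩
  rintro rfl
  have : Fact (1 < n) := ⟨hn⟩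
  exact one_ne_zero (add_eq_left.1 h)

theorem induce_compl_consecutive_columns_connected (hn : 4 ≤ n) (j : ZMod n) :
    ((lexCycleEmpty n).induce {v | v.1 ≠ j ∧ v.1 ≠ j + 1}).Connected := by
  have : NeZero n := ⟨by omega⟩
  set S : Set (ZMod n × Bool) := {v | v.1 ≠ j ∧ v.1 ≠ j + 1}
  have mem_iff (c : ZMod n) (b : Bool) : (c, b) ∈ S ↔ 2 ≤ (c - j).val := by
    rw [ZMod.two_le_val_iff (by omega), Ne, Ne, sub_eq_zero, sub_eq_iff_eq_add']
    rfl
  have column_mem {t : ℕ} (ht : 2 ≤ t) (htn : t < n) (b : Bool) : (j + t, b) ∈ S := by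
    rw [mem_iff, add_sub_cancel_left, ZMod.val_natCast_of_lt htn]
    exact ht
  let column (t : ℕ) (ht : 2 ≤ t) (htn : t < n) (b : Bool) : S := ⟨_, column_mem ht htn b⟩
  have adj_succ {t : ℕ} (ht : 2 ≤ t) (htn : t + 1 < n) (b b' : Bool) :
      ((lexCycleEmpty n).induce S).Adj (column t ht (by omega) b)
        (column (t + 1) (by omega) htn b') :=
    adj_of_fst_add_one_eq (by omega) <| by
      change j + t + 1 = j + ((t + 1 : ℕ) : ZMod n)
      push_cast; ring
  have reach : ∀ t (ht : 2 ≤ t) (htn : t < n) b,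
      ((lexCycleEmpty n).induce S).Reachable (column 2 le_rfl (by omega) false)
        (column t ht htn b) := by
    intro t ht
    induction t, ht using Nat.le_induction with
    | base =>
      rintro htn (_ | _)
      · rfl
      · exact (adj_succ le_rfl (by omega) false false).reachable.trans
          (adj_succ le_rfl (by omega) true false).reachable.symm
    | succ t ht ih =>
      intro htn b
      exact (ih (by omega) b).trans (adj_succ ht htn b b).reachable
  refine (connected_iff_exists_forall_reachable _).2 ⟨column 2 le_rfl (by omega) false, ?_⟩
  rintro ⟨⟨c, b⟩, hc⟩
  have hval := (mem_iff c b).1 hc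
  convert reach _ hval (ZMod.val_lt _) b
  simp

end lexCycleEmpty

theorem stmt_6_general (n : ℕ) (hn : 5 ≤ n) (i : ℕ) :
    ((lexCycleEmpty n).induce
      {v : ZMod n × Bool |
        v ∉ ({((i : ZMod n), false), ((i : ZMod n) + 1, false),
              ((i : ZMod n), true), ((i : ZMod n) + 1, true)} :
            Set (ZMod n × Bool))}).Connected := by
  rw [setOf_notMem_columns]
  exact lexCycleEmpty.induce_compl_consecutive_columns_connected (by omega) _

/-- let `n ≥ 5` and `1 ≤ i ≤ n`. The graph obtained from `Gₙ` by deleting the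
four vertices `xᵢ, x_{i+1}, yᵢ, y_{i+1}` (indices modulo `n`) is connected. -/
theorem stmt_6 (n : ℕ) (hn : 5 ≤ n) (i : ℕ) (hi : 1 ≤ i) (hin : i ≤ n) :
    ((lexCycleEmpty n).induce
      {v : ZMod n × Bool |
        v ∉ ({((i : ZMod n), false), ((i : ZMod n) + 1, false),
              ((i : ZMod n), true), ((i : ZMod n) + 1, true)} :
            Set (ZMod n × Bool))}).Connected :=
  stmt_6_general n hn i
end
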